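/- arXiv:2406.02758 — 2 statements merged into one kernel-verified Lean document; each statement's English description precedes it below -/
import Mathlib

section
/- Let h : B → X be holomorphic with h(0) = 0, set A = h'(0), and suppose that for some θ ∈ ℝ and c ≥ 0 one has Re⟨e^{−iθ}h(x), x*⟩ ≤ −c‖x‖² for all x ∈ B and all x* ∈ J(x). Then for every real t with c < t ≤ −K_A(θ), the mapping e^{−iθ}h + t·Id is holomorphically dissipative on the ball of radius r(t) := (t + K_A(θ))/(2c − t + K_A(θ)); that is, for every x ∈ B with ‖x‖ ≤ r(t) and every x* ∈ J(x), Re⟨e^{−iθ}h(x) + t x, x*⟩ ≤ 0. -/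
open Complex Metric

/-- The set `J(x)` of support functionals at `x`:
`{x* ∈ X* : ⟨x, x*⟩ = ‖x‖² = ‖x*‖²}`. -/
def suppFun {X : Type*} [NormedAddCommGroup X] [NormedSpace ℂ X] (x : X) :
    Set (X →L[ℂ] ℂ) :=
  {φ | φ x = (‖x‖ : ℂ) ^ 2 ∧ ‖φ‖ = ‖x‖}

/-- The class `N_a`: holomorphic mappings `f` of the open unit ball with `f(0)=0` and
`Re⟨f(x), x*⟩ ≥ a‖x‖²` for all `x ∈ B`, `x* ∈ J(x)`. -/
def IsNa {X : Type*} [NormedAddCommGroup X] [NormedSpace ℂ X] (a : ℝ) (f : X → X) : Prop :=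
  DifferentiableOn ℂ f (ball 0 1) ∧ f 0 = 0 ∧
    ∀ x ∈ ball (0 : X) 1, ∀ φ ∈ suppFun x, a * ‖x‖ ^ 2 ≤ (φ (f x)).re

/-- `K_A(θ) = sup { Re (e^{-iθ} w) : w ∈ V(A) }`, the support function of the
numerical range `V(A) = {⟨Ax, x*⟩ : ‖x‖ = 1, x* ∈ J(x)}`. -/
noncomputable def KA {X : Type*} [NormedAddCommGroup X] [NormedSpace ℂ X]
    (A : X →L[ℂ] X) (θ : ℝ) : ℝ :=
  sSup {s : ℝ | ∃ x : X, ‖x‖ = 1 ∧ ∃ φ ∈ suppFun x,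
    s = (Complex.exp (-(θ : ℂ) * Complex.I) * φ (A x)).re}

/-!
Fix `x ≠ 0`, write `x = r • u` with `r = ‖x‖`, `‖u‖ = 1`, and let `ψ = φ / r ∈ J(u)`. On the
complex line through `u` the function `W z = e^{-iθ} ⟨h (z • u), ψ⟩ / z` is holomorphic on the
unit disc. Testing the hypothesis at `z • u` against the support functional `conj z • ψ` gives
`Re W ≤ -c`, while `W 0 = e^{-iθ} ⟨A u, ψ⟩` has real part at most `K_A(θ)`. Harnack's inequality
for `-c - W` yields `Re W r ≤ -c + (c + K_A(θ)) (1 - r) / (1 + r)`, and this is `≤ -t` exactly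
when `r ≤ r(t)`; finally `Re e^{-iθ} ⟨h x, φ⟩ = r² Re W r`.
-/

open ComplexConjugate

section SupportFunctionals

variable {X : Type*} [NormedAddCommGroup X] [NormedSpace ℂ X]

lemma conj_smul_mem_suppFun {x : X} {φ : X →L[ℂ] ℂ} (hφ : φ ∈ suppFun x) (z : ℂ) :
    conj z • φ ∈ suppFun (z • x) := by
  obtain ⟨hφx, hφn⟩ := hφ
  refine ⟨?_, by rw [norm_smul, norm_smul, RCLike.norm_conj, hφn]⟩
  rw [smul_apply, map_smul, hφx, smul_eq_mul, smul_eq_mul, norm_smul, ofReal_mul, mul_pow,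
    ← mul_assoc, conj_mul']

lemma re_exp_mul_apply_le_KA (A : X →L[ℂ] X) (θ : ℝ) {u : X} (hu : ‖u‖ = 1)
    {ψ : X →L[ℂ] ℂ} (hψ : ψ ∈ suppFun u) :
    (exp (-(θ : ℂ) * I) * ψ (A u)).re ≤ KA A θ := by
  refine le_csSup ⟨‖A‖, ?_⟩ ⟨u, hu, ψ, hψ, rfl⟩
  rintro _ ⟨y, hy, φ, hφ, rfl⟩
  calc (exp (-(θ : ℂ) * I) * φ (A y)).re
      ≤ ‖exp (-(θ : ℂ) * I) * φ (A y)‖ := re_le_norm _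
    _ = ‖φ (A y)‖ := by rw [norm_mul, ← ofReal_neg, norm_exp_ofReal_mul_I, one_mul]
    _ ≤ ‖φ‖ * (‖A‖ * ‖y‖) := φ.le_of_opNorm_le_of_le le_rfl (A.le_opNorm y)
    _ = ‖A‖ := by rw [hφ.2, hy, one_mul, mul_one]

end SupportFunctionals

namespace Complex

lemma norm_sub_le_norm_add_conj {w a : ℂ} (hw : 0 ≤ w.re) (ha : 0 ≤ a.re) :
    ‖w - a‖ ≤ ‖w + conj a‖ := by
  have hsq : ‖w - a‖ ^ 2 ≤ ‖w + conj a‖ ^ 2 := by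
    simp only [Complex.sq_norm, normSq_apply, sub_re, sub_im, add_re, add_im, conj_re, conj_im]
    nlinarith [mul_nonneg hw ha]
  exact pow_le_pow_iff_left₀ (norm_nonneg _) (norm_nonneg _) two_ne_zero |>.mp hsq

lemma re_mul_div_le_re_of_norm_sub_le {w a : ℂ} {r : ℝ} (hr0 : 0 ≤ r) (hr1 : r ≤ 1)
    (hw : 0 ≤ w.re) (ha : 0 ≤ a.re) (h : ‖w - a‖ ≤ r * ‖w + conj a‖) :
    a.re * ((1 - r) / (1 + r)) ≤ w.re := by
  have hsq : (w.re - a.re) ^ 2 ≤ (r * (w.re + a.re)) ^ 2 := by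
    have := pow_le_pow_left₀ (norm_nonneg _) h 2
    simp only [mul_pow, Complex.sq_norm, normSq_apply, sub_re, sub_im, add_re, add_im, conj_re,
      conj_im] at this
    nlinarith [mul_le_one₀ hr1 hr0 hr1, sq_nonneg (w.im - a.im)]
  have hlin := (abs_le_of_sq_le_sq' hsq (by positivity)).1
  rw [← mul_div_assoc, div_le_iff₀ (by linarith)]
  linarith

/-- Harnack's inequality on the unit disc, proved by applying the Schwarz lemma to the
Cayley transform `(v - v 0) / (v + conj (v 0))`. -/
theorem harnack_of_re_nonneg {v : ℂ → ℂ} (hv : DifferentiableOn ℂ v (ball 0 1))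
    (hpos : ∀ z ∈ ball (0 : ℂ) 1, 0 ≤ (v z).re) {z : ℂ} (hz : z ∈ ball (0 : ℂ) 1) :
    (v 0).re * ((1 - ‖z‖) / (1 + ‖z‖)) ≤ (v z).re := by
  set a := v 0
  have ha : 0 ≤ a.re := hpos 0 (mem_ball_self one_pos)
  rcases ha.eq_or_lt with ha0 | ha0
  · rw [← ha0, zero_mul]
    exact hpos z hz
  have hden : ∀ w ∈ ball (0 : ℂ) 1, v w + conj a ≠ 0 := fun w hw h0 => by
    have := congrArg re h0
    simp only [add_re, conj_re, zero_re] at this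
    linarith [hpos w hw]
  set F : ℂ → ℂ := fun w => (v w - a) / (v w + conj a)
  have hF0 : F 0 = 0 := by simp [F, a]
  have hmaps : Set.MapsTo F (ball 0 1) (closedBall (F 0) 1) := fun w hw => by
    rw [hF0, mem_closedBall_zero_iff, norm_div]
    exact div_le_one_of_le₀ (norm_sub_le_norm_add_conj (hpos w hw) ha) (norm_nonneg _)
  have hschwarz := dist_le_div_mul_dist_of_mapsTo_ball (f := F)
    ((hv.sub_const a).div (hv.add_const _) hden) hmaps hz
  rw [hF0, dist_zero_right, dist_zero_right, div_one, one_mul, norm_div,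
    div_le_iff₀ (norm_pos_iff.mpr (hden z hz))] at hschwarz
  exact re_mul_div_le_re_of_norm_sub_le (norm_nonneg z) (mem_ball_zero_iff.mp hz).le
    (hpos z hz) ha hschwarz

end Complex

section RadialSlope

variable {X : Type*} [NormedAddCommGroup X] [NormedSpace ℂ X]

noncomputable def radialSlope (f : X → X) (u : X) (ψ : X →L[ℂ] ℂ) : ℂ → ℂ :=
  dslope (fun z : ℂ => ψ (f (z • u))) 0

lemma mapsTo_smul_ball {u : X} (hu : ‖u‖ ≤ 1) :
    Set.MapsTo (fun z : ℂ => z • u) (ball 0 1) (ball 0 1) := fun z hz => by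
  rw [mem_ball_zero_iff] at hz ⊢
  rw [norm_smul]
  nlinarith [norm_nonneg z]

lemma differentiableOn_radialSlope {f : X → X} (hf : DifferentiableOn ℂ f (ball 0 1))
    {u : X} (hu : ‖u‖ ≤ 1) (ψ : X →L[ℂ] ℂ) :
    DifferentiableOn ℂ (radialSlope f u ψ) (ball 0 1) :=
  (differentiableOn_dslope (ball_mem_nhds 0 one_pos)).mpr <|
    ψ.differentiable.comp_differentiableOn <|
      hf.comp (differentiable_id.smul_const u).differentiableOn (mapsTo_smul_ball hu)

lemma radialSlope_zero {f : X → X} (hf : DifferentiableAt ℂ f 0) (u : X) (ψ : X →L[ℂ] ℂ) :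
    radialSlope f u ψ 0 = ψ (fderiv ℂ f 0 u) := by
  have hline : HasDerivAt (fun z : ℂ => z • u) u 0 := by
    simpa using (hasDerivAt_id (0 : ℂ)).smul_const u
  have hf' : HasFDerivAt f (fderiv ℂ f 0) ((0 : ℂ) • u) := by
    rw [zero_smul]
    exact hf.hasFDerivAt
  rw [radialSlope, dslope_same]
  exact (ψ.hasFDerivAt.comp_hasDerivAt 0 (hf'.comp_hasDerivAt 0 hline)).deriv

lemma radialSlope_of_ne_zero {f : X → X} (hf0 : f 0 = 0) (u : X) (ψ : X →L[ℂ] ℂ) {z : ℂ}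
    (hz : z ≠ 0) : radialSlope f u ψ z = ψ (f (z • u)) / z := by
  rw [radialSlope, dslope_of_ne _ hz, slope_def_field]
  simp [hf0]

lemma apply_eq_sq_mul_radialSlope {f : X → X} (hf0 : f 0 = 0) {x : X} (hx : x ≠ 0)
    (φ : X →L[ℂ] ℂ) :
    φ (f x) = (‖x‖ : ℂ) ^ 2 * radialSlope f ((‖x‖ : ℂ)⁻¹ • x) ((‖x‖ : ℂ)⁻¹ • φ) ‖x‖ := by
  have hr0 : (‖x‖ : ℂ) ≠ 0 := ofReal_ne_zero.mpr (norm_ne_zero_iff.mpr hx)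
  rw [radialSlope_of_ne_zero hf0 _ _ hr0, smul_smul, mul_inv_cancel₀ hr0, one_smul,
    smul_apply, smul_eq_mul]
  field_simp

variable {f : X → X} {c : ℝ} {u : X} {ψ : X →L[ℂ] ℂ}

lemma re_radialSlope_le (hf0 : f 0 = 0)
    (hdiss : ∀ x ∈ ball (0 : X) 1, ∀ φ ∈ suppFun x, (φ (f x)).re ≤ -c * ‖x‖ ^ 2)
    (hu : ‖u‖ = 1) (hψ : ψ ∈ suppFun u) {z : ℂ} (hz : z ∈ ball (0 : ℂ) 1) (hz0 : z ≠ 0) :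
    (radialSlope f u ψ z).re ≤ -c := by
  have hbound := hdiss _ (mapsTo_smul_ball hu.le hz) _ (conj_smul_mem_suppFun hψ z)
  rw [smul_apply, smul_eq_mul, norm_smul, hu, mul_one, ← normSq_eq_norm_sq] at hbound
  have hquot : ψ (f (z • u)) / z = ((normSq z)⁻¹ : ℝ) * (conj z * ψ (f (z • u))) := by
    rw [div_eq_mul_inv, inv_def]
    ring
  rw [radialSlope_of_ne_zero hf0 u ψ hz0, hquot, re_ofReal_mul,
    inv_mul_le_iff₀ (normSq_pos.mpr hz0)]
  linarith

lemma sub_le_neg_sub_mul_div_of_le_div {c t K r : ℝ} (ht : c < t) (ht' : t ≤ -K) (hr : 0 ≤ r)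
    (hrt : r ≤ (t + K) / (2 * c - t + K)) : t - c ≤ (-c - K) * ((1 - r) / (1 + r)) := by
  rw [le_div_iff_of_neg (by linarith)] at hrt
  rw [← mul_div_assoc, le_div_iff₀ (by linarith)]
  linarith

lemma re_radialSlope_le_of_le_radius {t K : ℝ} (hf : DifferentiableOn ℂ f (ball 0 1))
    (hf0 : f 0 = 0)
    (hdiss : ∀ x ∈ ball (0 : X) 1, ∀ φ ∈ suppFun x, (φ (f x)).re ≤ -c * ‖x‖ ^ 2)
    (hu : ‖u‖ = 1) (hψ : ψ ∈ suppFun u) (hK : (ψ (fderiv ℂ f 0 u)).re ≤ K)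
    (ht : c < t) (ht' : t ≤ -K) {z : ℂ} (hz : z ∈ ball (0 : ℂ) 1)
    (hzt : ‖z‖ ≤ (t + K) / (2 * c - t + K)) :
    (radialSlope f u ψ z).re ≤ -t := by
  have hW0 : (radialSlope f u ψ 0).re ≤ K := by
    rwa [radialSlope_zero (hf.differentiableAt (ball_mem_nhds 0 one_pos))]
  set W := radialSlope f u ψ
  have hW : ∀ w ∈ ball (0 : ℂ) 1, (W w).re ≤ -c := fun w hw => by
    rcases eq_or_ne w 0 with rfl | hw0
    · linarith
    · exact re_radialSlope_le hf0 hdiss hu hψ hw hw0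
  have harnack := Complex.harnack_of_re_nonneg (v := fun w => -c - W w)
    ((differentiableOn_const _).sub (differentiableOn_radialSlope hf hu.le ψ))
    (fun w hw => by simpa using hW w hw) hz
  simp only [sub_re, neg_re, ofReal_re] at harnack
  have hfactor : 0 ≤ (1 - ‖z‖) / (1 + ‖z‖) := by
    have := mem_ball_zero_iff.mp hz
    exact div_nonneg (by linarith) (by positivity)
  calc (W z).re ≤ -c - (-c - (W 0).re) * ((1 - ‖z‖) / (1 + ‖z‖)) := by linarith
    _ ≤ -c - (-c - K) * ((1 - ‖z‖) / (1 + ‖z‖)) := by gcongr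
    _ ≤ -t := by linarith [sub_le_neg_sub_mul_div_of_le_div ht ht' (norm_nonneg z) hzt]

end RadialSlope

theorem stmt_5_general {X : Type*} [NormedAddCommGroup X] [NormedSpace ℂ X]
    (h : X → X) (hh : DifferentiableOn ℂ h (ball 0 1)) (h0 : h 0 = 0)
    (A : X →L[ℂ] X) (hA : A = fderiv ℂ h 0)
    (θ c : ℝ)
    (hdiss : ∀ x ∈ ball (0 : X) 1, ∀ φ ∈ suppFun x,
      (Complex.exp (-(θ : ℂ) * Complex.I) * φ (h x)).re ≤ -c * ‖x‖ ^ 2)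
    (t : ℝ) (ht : c < t) (ht' : t ≤ -KA A θ) :
    ∀ x ∈ ball (0 : X) 1, ‖x‖ ≤ (t + KA A θ) / (2 * c - t + KA A θ) →
      ∀ φ ∈ suppFun x,
        (Complex.exp (-(θ : ℂ) * Complex.I) * φ (h x) + (t : ℂ) * φ x).re ≤ 0 := by
  intro x hx hxt φ hφ
  rcases eq_or_ne x 0 with rfl | hx0
  · simp [h0]
  set E := exp (-(θ : ℂ) * I)
  have hf0 : (E • h) 0 = 0 := by simp [h0]
  have hfdiss : ∀ y ∈ ball (0 : X) 1, ∀ φ ∈ suppFun y, (φ ((E • h) y)).re ≤ -c * ‖y‖ ^ 2 := by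
    simpa only [Pi.smul_apply, map_smul, smul_eq_mul] using hdiss
  set u : X := (‖x‖ : ℂ)⁻¹ • x
  set ψ : X →L[ℂ] ℂ := (‖x‖ : ℂ)⁻¹ • φ
  have hu : ‖u‖ = 1 := norm_smul_inv_norm hx0
  have hψ : ψ ∈ suppFun u := by simpa [ψ] using conj_smul_mem_suppFun hφ (‖x‖ : ℂ)⁻¹
  have hK : (ψ (fderiv ℂ (E • h) 0 u)).re ≤ KA A θ := by
    rw [fderiv_const_smul (hh.differentiableAt (ball_mem_nhds 0 one_pos)), ← hA]
    change (ψ (E • A u)).re ≤ _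
    rw [map_smul ψ, smul_eq_mul]
    exact re_exp_mul_apply_le_KA A θ hu hψ
  have hr_norm : ‖(‖x‖ : ℂ)‖ = ‖x‖ := by simp
  have hslope := re_radialSlope_le_of_le_radius (hh.const_smul E) hf0 hfdiss hu hψ hK ht ht'
    (by rwa [mem_ball_zero_iff, hr_norm, ← mem_ball_zero_iff]) (by rwa [hr_norm])
  have hx_eq := apply_eq_sq_mul_radialSlope hf0 hx0 φ
  rw [Pi.smul_apply, map_smul, smul_eq_mul] at hx_eq
  rw [add_re, hx_eq, hφ.1, ← ofReal_pow, re_ofReal_mul, ← ofReal_mul, ofReal_re]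
  linarith [mul_le_mul_of_nonneg_left hslope (sq_nonneg ‖x‖)]

/-- The mapping `e^{-iθ}h + t·Id` is holomorphically dissipative on the ball
of radius `r(t) = (t + K_A(θ))/(2c - t + K_A(θ))`, for `c < t ≤ -K_A(θ)`. -/
theorem stmt_5 {X : Type*} [NormedAddCommGroup X] [NormedSpace ℂ X] [Nontrivial X]
    (h : X → X) (hh : DifferentiableOn ℂ h (ball 0 1)) (h0 : h 0 = 0)
    (A : X →L[ℂ] X) (hA : A = fderiv ℂ h 0)
    (θ c : ℝ) (hc : 0 ≤ c)
    (hdiss : ∀ x ∈ ball (0 : X) 1, ∀ φ ∈ suppFun x,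
      (Complex.exp (-(θ : ℂ) * Complex.I) * φ (h x)).re ≤ -c * ‖x‖ ^ 2)
    (t : ℝ) (ht : c < t) (ht' : t ≤ -KA A θ) :
    ∀ x ∈ ball (0 : X) 1, ‖x‖ ≤ (t + KA A θ) / (2 * c - t + KA A θ) →
      ∀ φ ∈ suppFun x,
        (Complex.exp (-(θ : ℂ) * Complex.I) * φ (h x) + (t : ℂ) * φ x).re ≤ 0 :=
  stmt_5_general h hh h0 A hA θ c hdiss t ht ht'
end

section
/- Let a ≥ 0, let f ∈ N_a satisfy Assumption A, let λ > 0, and let G_λ be the resolvent of f. Set a_λ := max( a/(1 + λa), (−2 − λK)/(λ(1 − λK)) ). Then f ∘ G_λ ∈ N_{a_λ}; that is, (f ∘ G_λ)(0) = 0 and Re⟨f(G_λ(x)), x*⟩ ≥ a_λ‖x‖² for every x ∈ B and every x* ∈ J(x). -/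
open Complex Metric

/-- `G` is the (non-linear) resolvent of `f` with parameter `lam`: a holomorphic
self-mapping of the unit ball such that `w = G x` is the unique solution in the ball
of `w + lam f(w) = x`. -/
def IsResolvent {X : Type*} [NormedAddCommGroup X] [NormedSpace ℂ X]
    (f : X → X) (lam : ℝ) (G : X → X) : Prop :=
  DifferentiableOn ℂ G (ball 0 1) ∧
    ∀ x ∈ ball (0 : X) 1, G x ∈ ball (0 : X) 1 ∧ G x + (lam : ℂ) • f (G x) = x ∧
      ∀ w ∈ ball (0 : X) 1, w + (lam : ℂ) • f w = x → w = G x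

/-!
Write `w = G x`, so `w + λ f(w) = x`. Pairing this identity with `φ ∈ J(x)` gives
`λ Re⟨f(w), φ⟩ ≥ ‖x‖² - ‖x‖‖w‖`, and pairing it with `ψ ∈ J(w)` gives
`‖w‖² + λ Re⟨f(w), ψ⟩ ≤ ‖w‖‖x‖`, so any lower bound on `Re⟨f(w), ψ⟩` bounds `‖w‖/‖x‖` from above.
Two lower bounds are available: `a‖w‖²`, from `f ∈ N_a`, and `-K (1-‖w‖)/(1+‖w‖) ‖w‖²`, from
Harnack's inequality applied to the holomorphic function `t ↦ ⟨f(t u), φ_u⟩ / t` (`‖u‖ = 1`,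
`φ_u ∈ J(u)`), whose real part is nonnegative on the disc and at least `-K` at `0`. Each yields
one of the two terms of `a_λ`; the second also uses `‖x‖ < 1`.
-/

open ComplexConjugate Topology

namespace Complex

theorem norm_sub_lt_norm_add_conj {p c : ℂ} (hp : 0 < p.re) (hc : 0 < c.re) :
    ‖p - c‖ < ‖p + conj c‖ := by
  refine (sq_lt_sq₀ (norm_nonneg _) (norm_nonneg _)).1 ?_
  simp only [Complex.sq_norm, normSq_apply, sub_re, sub_im, add_re, add_im, conj_re, conj_im]
  nlinarith [mul_pos hp hc]

theorem re_mul_le_of_norm_sub_le {p c : ℂ} {ρ : ℝ} (hp : 0 ≤ p.re) (hc : 0 ≤ c.re) (hρ : 0 ≤ ρ)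
    (h : ‖p - c‖ ≤ ρ * ‖p + conj c‖) : c.re * (1 - ρ) ≤ p.re * (1 + ρ) := by
  have hsq : ‖p - c‖ ^ 2 ≤ ρ ^ 2 * ‖p + conj c‖ ^ 2 := by
    rw [← mul_pow]; exact pow_le_pow_left₀ (norm_nonneg _) h 2
  simp only [Complex.sq_norm, normSq_apply, sub_re, sub_im, add_re, add_im, conj_re, conj_im] at hsq
  rcases le_or_gt 1 ρ with hρ1 | hρ1
  · nlinarith [mul_nonneg hp hρ]
  have hre : (p.re - c.re) ^ 2 ≤ (ρ * (p.re + c.re)) ^ 2 := by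
    nlinarith [mul_nonneg (sq_nonneg (p.im - c.im)) (sub_nonneg.2 hρ1.le)]
  nlinarith [abs_le_of_sq_le_sq' hre (mul_nonneg hρ (add_nonneg hp hc))]

/-- Schwarz's lemma for the Cayley transform `(q - q 0) / (q + conj (q 0))`, which maps the
unit disc into itself because `q` takes values in the right half-plane. -/
theorem norm_sub_le_mul_norm_add_conj {q : ℂ → ℂ} (hq : DifferentiableOn ℂ q (ball 0 1))
    (hre : ∀ z ∈ ball (0 : ℂ) 1, 0 < (q z).re) {z : ℂ} (hz : z ∈ ball (0 : ℂ) 1) :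
    ‖q z - q 0‖ ≤ ‖z‖ * ‖q z + conj (q 0)‖ := by
  have h0 : (0 : ℂ) ∈ ball (0 : ℂ) 1 := mem_ball_self one_pos
  have hden : ∀ w ∈ ball (0 : ℂ) 1, ‖q w - q 0‖ < ‖q w + conj (q 0)‖ := fun w hw =>
    norm_sub_lt_norm_add_conj (hre w hw) (hre 0 h0)
  have hden0 : ∀ w ∈ ball (0 : ℂ) 1, q w + conj (q 0) ≠ 0 := fun w hw =>
    norm_pos_iff.1 ((norm_nonneg _).trans_lt (hden w hw))
  set g : ℂ → ℂ := fun w => (q w - q 0) / (q w + conj (q 0))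
  have hg : DifferentiableOn ℂ g (ball 0 1) := (hq.sub_const _).div (hq.add_const _) hden0
  have hmaps : Set.MapsTo g (ball 0 1) (closedBall 0 1) := fun w hw => by
    rw [mem_closedBall_zero_iff, norm_div]
    exact div_le_one_of_le₀ (hden w hw).le (norm_nonneg _)
  have hschwarz : ‖g z‖ ≤ ‖z‖ :=
    norm_le_norm_of_mapsTo_ball hg hmaps (by simp [g]) (by simpa using hz)
  rwa [norm_div, div_le_iff₀ (norm_pos_iff.2 (hden0 z hz))] at hschwarz

theorem re_mul_one_sub_le_of_re_nonneg {q : ℂ → ℂ} (hq : DifferentiableOn ℂ q (ball 0 1))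
    (hre : ∀ z ∈ ball (0 : ℂ) 1, 0 ≤ (q z).re) {z : ℂ} (hz : z ∈ ball (0 : ℂ) 1) :
    (q 0).re * (1 - ‖z‖) ≤ (q z).re * (1 + ‖z‖) := by
  have hz1 : ‖z‖ < 1 := mem_ball_zero_iff.1 hz
  -- Harnack's inequality for `q + ε`, whose real part is strictly positive; then `ε → 0`.
  have hshift : ∀ ε > 0, ((q 0).re + ε) * (1 - ‖z‖) ≤ ((q z).re + ε) * (1 + ‖z‖) := by
    intro ε hε
    have hpos : ∀ w ∈ ball (0 : ℂ) 1, 0 < (q w + ε).re := fun w hw => by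
      simpa using add_pos_of_nonneg_of_pos (hre w hw) hε
    simpa using re_mul_le_of_norm_sub_le (hpos z hz).le (hpos 0 (mem_ball_self one_pos)).le
      (norm_nonneg z) (norm_sub_le_mul_norm_add_conj (hq.add_const _) hpos hz)
  refine le_of_forall_pos_le_add fun ε hε => ?_
  nlinarith [hshift (ε / 2) (half_pos hε), norm_nonneg z]

end Complex

section SupportFunctional

variable {X : Type*} [NormedAddCommGroup X] [NormedSpace ℂ X]

theorem re_apply_le_of_mem_suppFun {x : X} {φ : X →L[ℂ] ℂ} (hφ : φ ∈ suppFun x) (y : X) :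
    (φ y).re ≤ ‖x‖ * ‖y‖ :=
  calc (φ y).re ≤ ‖φ y‖ := Complex.re_le_norm _
    _ ≤ ‖φ‖ * ‖y‖ := φ.le_opNorm y
    _ = ‖x‖ * ‖y‖ := by rw [hφ.2]

theorem smul_mem_suppFun {x : X} {φ : X →L[ℂ] ℂ} (hφ : φ ∈ suppFun x) (c : ℂ) :
    conj c • φ ∈ suppFun (c • x) := by
  refine ⟨?_, ?_⟩
  · rw [smul_apply, map_smul, hφ.1, norm_smul, smul_eq_mul, smul_eq_mul,
      ← mul_assoc, ← Complex.normSq_eq_conj_mul_self, Complex.normSq_eq_norm_sq]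
    push_cast; ring
  · rw [norm_smul, norm_smul, hφ.2, Complex.norm_conj]

theorem exists_mem_suppFun (x : X) : ∃ φ, φ ∈ suppFun x := by
  rcases eq_or_ne x 0 with rfl | hx
  · exact ⟨0, by simp [suppFun]⟩
  obtain ⟨g, hg, hgx⟩ := exists_dual_vector ℂ x (norm_ne_zero_iff.2 hx)
  refine ⟨(‖x‖ : ℂ) • g, ?_, ?_⟩
  · simp [hgx, sq]
  · rw [norm_smul, hg, mul_one, Complex.norm_real, Real.norm_of_nonneg (norm_nonneg x)]

theorem neg_re_le_KA_pi (A : X →L[ℂ] X) {u : X} (hu : ‖u‖ = 1) {φ : X →L[ℂ] ℂ}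
    (hφ : φ ∈ suppFun u) : -(φ (A u)).re ≤ KA A Real.pi := by
  refine le_csSup ⟨‖A‖, ?_⟩ ⟨u, hu, φ, hφ, by simp⟩
  rintro s ⟨x, hx, ψ, hψ, rfl⟩
  calc (Complex.exp (-(Real.pi : ℂ) * Complex.I) * ψ (A x)).re
      = -(ψ (A x)).re := by simp
    _ ≤ ‖x‖ * ‖A x‖ := by
      simpa using re_apply_le_of_mem_suppFun hψ (-A x)
    _ ≤ ‖A‖ := by simpa [hx] using A.le_opNorm x

end SupportFunctional

section ClassN

variable {X : Type*} [NormedAddCommGroup X] [NormedSpace ℂ X] {f : X → X}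

theorem IsNa.mono {a b : ℝ} (hf : IsNa a f) (hba : b ≤ a) : IsNa b f :=
  ⟨hf.1, hf.2.1, fun x hx φ hφ =>
    (mul_le_mul_of_nonneg_right hba (sq_nonneg ‖x‖)).trans (hf.2.2 x hx φ hφ)⟩

theorem smul_mem_ball_of_norm_eq_one {u : X} (hu : ‖u‖ = 1) {t : ℂ} (ht : t ∈ ball (0 : ℂ) 1) :
    t • u ∈ ball (0 : X) 1 := by
  simpa [norm_smul, hu] using ht

theorem IsNa.differentiableOn_slice {a : ℝ} (hf : IsNa a f) {u : X} (hu : ‖u‖ = 1) (φ : X →L[ℂ] ℂ) :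
    DifferentiableOn ℂ (fun t : ℂ => φ (f (t • u))) (ball 0 1) :=
  φ.differentiable.comp_differentiableOn <|
    hf.1.comp (differentiable_id.smul_const u).differentiableOn
      fun _ ht => smul_mem_ball_of_norm_eq_one hu ht

/-- The slope `φ(f(t u)) / t` of `f` along the unit vector `u` has nonnegative real part:
for `t ≠ 0` this is `Re ⟨f(t u), conj t • φ⟩ ≥ 0` with `conj t • φ ∈ J(t u)`, and at `t = 0`
it follows by continuity. -/
theorem IsNa.re_dslope_slice_nonneg (hf : IsNa 0 f) {u : X} (hu : ‖u‖ = 1)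
    {φ : X →L[ℂ] ℂ} (hφ : φ ∈ suppFun u) :
    ∀ t ∈ ball (0 : ℂ) 1, 0 ≤ (dslope (fun t : ℂ => φ (f (t • u))) 0 t).re := by
  set F : ℂ → ℂ := fun t => φ (f (t • u))
  have hF0 : F 0 = 0 := by simp [F, hf.2.1]
  have hpunct : ∀ t ∈ ball (0 : ℂ) 1, t ≠ 0 → 0 ≤ (dslope F 0 t).re := by
    intro t ht ht0
    have hslope : dslope F 0 t = conj t * F t / (Complex.normSq t : ℂ) := by
      rw [dslope_of_ne F ht0, slope_def_field, hF0, sub_zero, sub_zero,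
        Complex.normSq_eq_conj_mul_self]
      field_simp [(map_ne_zero (starRingEnd ℂ)).2 ht0]
    have hN := hf.2.2 _ (smul_mem_ball_of_norm_eq_one hu ht) _ (smul_mem_suppFun hφ t)
    rw [hslope, Complex.div_ofReal_re]
    exact div_nonneg (by simpa [F] using hN) (Complex.normSq_nonneg t)
  have hq := (Complex.differentiableOn_dslope (ball_mem_nhds 0 one_pos)).2
    (hf.differentiableOn_slice hu φ)
  intro t ht
  rcases ne_or_eq t 0 with ht0 | rfl
  · exact hpunct t ht ht0
  have hcont : Filter.Tendsto (fun t => (dslope F 0 t).re) (𝓝[≠] 0) (𝓝 (dslope F 0 0).re) :=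
    (Complex.continuous_re.tendsto _).comp
      ((hq.continuousOn.continuousAt (ball_mem_nhds 0 one_pos)).tendsto.mono_left
        nhdsWithin_le_nhds)
  refine ge_of_tendsto hcont ?_
  filter_upwards [self_mem_nhdsWithin, nhdsWithin_le_nhds (ball_mem_nhds (0 : ℂ) one_pos)]
    with t ht0 ht using hpunct t ht ht0

theorem IsNa.dslope_slice_zero {a : ℝ} (hf : IsNa a f) (u : X) (φ : X →L[ℂ] ℂ) :
    dslope (fun t : ℂ => φ (f (t • u))) 0 0 = φ (fderiv ℂ f 0 u) := by
  have hf0 : HasFDerivAt f (fderiv ℂ f 0) ((0 : ℂ) • u) := by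
    rw [zero_smul]
    exact (hf.1.differentiableAt (ball_mem_nhds 0 one_pos)).hasFDerivAt
  have hline : HasDerivAt (fun t : ℂ => t • u) u 0 := by
    simpa using (hasDerivAt_id (0 : ℂ)).smul_const u
  rw [dslope_same]
  exact (φ.hasFDerivAt.comp_hasDerivAt 0 (hf0.comp_hasDerivAt 0 hline)).deriv

/-- Harnack's inequality for the slope of `f` along `y / ‖y‖`, whose value at `0` has real
part at least `-K_A(π)`. -/
theorem IsNa.neg_KA_pi_mul_le (hf : IsNa 0 f) {y : X} (hy : y ∈ ball (0 : X) 1)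
    {ψ : X →L[ℂ] ℂ} (hψ : ψ ∈ suppFun y) :
    -KA (fderiv ℂ f 0) Real.pi * (1 - ‖y‖) * ‖y‖ ^ 2 ≤ (ψ (f y)).re * (1 + ‖y‖) := by
  rcases eq_or_ne y 0 with rfl | hy0
  · simp [hf.2.1]
  set r := ‖y‖
  have hr0 : 0 < r := norm_pos_iff.2 hy0
  have hr1 : r < 1 := mem_ball_zero_iff.1 hy
  set u : X := ((r⁻¹ : ℝ) : ℂ) • y
  set φ : X →L[ℂ] ℂ := ((r⁻¹ : ℝ) : ℂ) • ψ
  have hu : ‖u‖ = 1 := by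
    rw [norm_smul, Complex.norm_real, Real.norm_of_nonneg (inv_nonneg.2 hr0.le),
      inv_mul_cancel₀ hr0.ne']
  have hφ : φ ∈ suppFun u := by
    simpa only [Complex.conj_ofReal] using smul_mem_suppFun hψ ((r⁻¹ : ℝ) : ℂ)
  have hru : (r : ℂ) • u = y := by
    simp only [u, smul_smul, ← Complex.ofReal_mul, mul_inv_cancel₀ hr0.ne', Complex.ofReal_one,
      one_smul]
  have hrball : (r : ℂ) ∈ ball (0 : ℂ) 1 := by
    simpa [Real.norm_of_nonneg hr0.le] using hr1
  set q := dslope (fun t : ℂ => φ (f (t • u))) 0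
  have hharnack : (q 0).re * (1 - ‖(r : ℂ)‖) ≤ (q r).re * (1 + ‖(r : ℂ)‖) :=
    Complex.re_mul_one_sub_le_of_re_nonneg
      ((Complex.differentiableOn_dslope (ball_mem_nhds 0 one_pos)).2
        (hf.differentiableOn_slice hu φ)) (hf.re_dslope_slice_nonneg hu hφ) hrball
  have hq0 : -KA (fderiv ℂ f 0) Real.pi ≤ (q 0).re := by
    have : q 0 = φ (fderiv ℂ f 0 u) := hf.dslope_slice_zero u φ
    linarith [this ▸ neg_re_le_KA_pi (fderiv ℂ f 0) hu hφ]
  have hqr : (q r).re * r ^ 2 = (ψ (f y)).re := by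
    have : q r = φ (f ((r : ℂ) • u)) / r := by
      simp only [q, dslope_of_ne _ (Complex.ofReal_ne_zero.2 hr0.ne'), slope_def_field]
      simp [hf.2.1]
    rw [this, hru]
    simp only [φ, smul_apply, smul_eq_mul, Complex.div_ofReal_re, Complex.re_ofReal_mul]
    field_simp
  rw [Complex.norm_real, Real.norm_of_nonneg hr0.le] at hharnack
  calc -KA (fderiv ℂ f 0) Real.pi * (1 - r) * r ^ 2 ≤ (q 0).re * (1 - r) * r ^ 2 := by gcongr
    _ ≤ (q r).re * (1 + r) * r ^ 2 := by gcongr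
    _ = (ψ (f y)).re * (1 + r) := by rw [← hqr]; ring

end ClassN

section Resolvent

variable {X : Type*} [NormedAddCommGroup X] [NormedSpace ℂ X]

theorem re_apply_add_smul_eq {w v x : X} {lam : ℝ} (h : w + (lam : ℂ) • v = x)
    (φ : X →L[ℂ] ℂ) : (φ w).re + lam * (φ v).re = (φ x).re := by
  simp [← h]

theorem re_apply_self_of_mem_suppFun {x : X} {φ : X →L[ℂ] ℂ} (hφ : φ ∈ suppFun x) :
    (φ x).re = ‖x‖ ^ 2 := by
  rw [hφ.1, ← Complex.ofReal_pow, Complex.ofReal_re]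

theorem sq_norm_add_mul_re_le_of_add_smul_eq {w v x : X} {lam : ℝ} (h : w + (lam : ℂ) • v = x)
    {ψ : X →L[ℂ] ℂ} (hψ : ψ ∈ suppFun w) : ‖w‖ ^ 2 + lam * (ψ v).re ≤ ‖w‖ * ‖x‖ := by
  rw [← re_apply_self_of_mem_suppFun hψ, re_apply_add_smul_eq h]
  exact re_apply_le_of_mem_suppFun hψ x

theorem sq_norm_sub_le_mul_re_of_add_smul_eq {w v x : X} {lam : ℝ} (h : w + (lam : ℂ) • v = x)
    {φ : X →L[ℂ] ℂ} (hφ : φ ∈ suppFun x) : ‖x‖ ^ 2 - ‖x‖ * ‖w‖ ≤ lam * (φ v).re := by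
  linarith [re_apply_add_smul_eq h φ, re_apply_self_of_mem_suppFun hφ,
    re_apply_le_of_mem_suppFun hφ w]

end Resolvent

section RealInequalities

theorem div_one_add_mul_mul_sq_le {a lam r s : ℝ} (ha : 0 ≤ a) (hlam : 0 < lam) (hr : 0 ≤ r)
    (h : s * (1 + lam * a) ≤ r) : a / (1 + lam * a) * r ^ 2 ≤ (r ^ 2 - r * s) / lam := by
  rw [div_mul_eq_mul_div, div_le_div_iff₀ (by positivity) hlam]
  nlinarith [mul_nonneg hr (sub_nonneg.2 h)]

theorem one_add_mul_le_three_mul {t r s : ℝ} (ht : 0 ≤ t) (hs : 0 ≤ s) (hs1 : s < 1)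
    (hr1 : r < 1) (h : s * (1 + s) + t * s * (1 - s) ≤ r * (1 + s)) : (1 + t) * s ≤ 3 * r := by
  have hts : t * s < 1 + s := by
    have : t * s * (1 - s) < (1 + s) * (1 - s) := by nlinarith
    exact lt_of_mul_lt_mul_right this (by linarith)
  have hkey : 2 * t * s ≤ 1 + s + t := by nlinarith [mul_le_mul_of_nonneg_left hs1.le ht]
  nlinarith

theorem div_mul_one_sub_mul_mul_sq_le {K lam r s : ℝ} (hK : K < 0) (hlam : 0 < lam)
    (hr : 0 ≤ r) (hr1 : r < 1) (hs : 0 ≤ s) (hs1 : s < 1)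
    (h : s * (1 + s) + -lam * K * s * (1 - s) ≤ r * (1 + s)) :
    (-2 - lam * K) / (lam * (1 - lam * K)) * r ^ 2 ≤ (r ^ 2 - r * s) / lam := by
  have hlamK : 0 ≤ -lam * K := by nlinarith
  have h3 := one_add_mul_le_three_mul hlamK hs hs1 hr1 h
  rw [div_mul_eq_mul_div, div_le_div_iff₀ (by nlinarith) hlam]
  nlinarith [mul_le_mul_of_nonneg_left h3 hr]

theorem max_mul_sq_le_of_resolvent_ineq {a K lam r s P D : ℝ} (ha : 0 ≤ a) (hK : K < 0)
    (hlam : 0 < lam) (hr : 0 ≤ r) (hr1 : r < 1) (hs : 0 ≤ s) (hs1 : s < 1)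
    (hP : s ^ 2 + lam * P ≤ s * r) (hPa : a * s ^ 2 ≤ P)
    (hPK : -K * (1 - s) * s ^ 2 ≤ P * (1 + s)) (hD : r ^ 2 - r * s ≤ lam * D) :
    max (a / (1 + lam * a)) ((-2 - lam * K) / (lam * (1 - lam * K))) * r ^ 2 ≤ D := by
  have hD' : (r ^ 2 - r * s) / lam ≤ D := (div_le_iff₀' hlam).2 hD
  obtain ⟨h1, h2⟩ : s * (1 + lam * a) ≤ r ∧
      s * (1 + s) + -lam * K * s * (1 - s) ≤ r * (1 + s) := by
    rcases hs.eq_or_lt with rfl | hs0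
    · constructor <;> linarith
    constructor
    · refine le_of_mul_le_mul_left ?_ hs0
      nlinarith [mul_le_mul_of_nonneg_left hPa hlam.le]
    · refine le_of_mul_le_mul_left ?_ hs0
      nlinarith [mul_le_mul_of_nonneg_left hPK hlam.le,
        mul_le_mul_of_nonneg_right hP (by linarith : 0 ≤ 1 + s)]
  rw [max_mul_of_nonneg _ _ (sq_nonneg r), max_le_iff]
  exact ⟨(div_one_add_mul_mul_sq_le ha hlam hr h1).trans hD',
    (div_mul_one_sub_mul_mul_sq_le hK hlam hr hr1 hs hs1 h2).trans hD'⟩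

end RealInequalities

theorem stmt_10_general {X : Type*} [NormedAddCommGroup X] [NormedSpace ℂ X]
    (a : ℝ) (ha : 0 ≤ a) (f : X → X) (hf : IsNa a f)
    (K : ℝ) (hKdef : K = KA (fderiv ℂ f 0) Real.pi) (hK : K < 0)
    (lam : ℝ) (hlam : 0 < lam)
    (G : X → X) (hG : IsResolvent f lam G)
    (alam : ℝ)
    (halam : alam = max (a / (1 + lam * a)) ((-2 - lam * K) / (lam * (1 - lam * K)))) :
    f (G 0) = 0 ∧
    ∀ x ∈ ball (0 : X) 1, ∀ φ ∈ suppFun x, alam * ‖x‖ ^ 2 ≤ (φ (f (G x))).re := by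
  have h0 : (0 : X) ∈ ball (0 : X) 1 := mem_ball_self one_pos
  have hG0 : G 0 = 0 := ((hG.2 0 h0).2.2 0 h0 (by simp [hf.2.1])).symm
  refine ⟨by rw [hG0, hf.2.1], fun x hx φ hφ => ?_⟩
  obtain ⟨hw, hwx, -⟩ := hG.2 x hx
  obtain ⟨ψ, hψ⟩ := exists_mem_suppFun (G x)
  have hPK := (hf.mono ha).neg_KA_pi_mul_le hw hψ
  rw [← hKdef] at hPK
  rw [halam]
  exact max_mul_sq_le_of_resolvent_ineq ha hK hlam (norm_nonneg x) (mem_ball_zero_iff.1 hx)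
    (norm_nonneg _) (mem_ball_zero_iff.1 hw) (sq_norm_add_mul_re_le_of_add_smul_eq hwx hψ)
    (hf.2.2 _ hw ψ hψ) hPK (sq_norm_sub_le_mul_re_of_add_smul_eq hwx hφ)

/-- Corollary 4.4: `f ∘ G_λ ∈ N_{a_λ}` with
`a_λ = max( a/(1+λa), (-2-λK)/(λ(1-λK)) )`. -/
theorem stmt_10 {X : Type*} [NormedAddCommGroup X] [NormedSpace ℂ X] [Nontrivial X]
    (a : ℝ) (ha : 0 ≤ a) (f : X → X) (hf : IsNa a f)
    (K : ℝ) (hKdef : K = KA (fderiv ℂ f 0) Real.pi) (hK : K < 0) (hKa : K + a ≤ 0)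
    (lam : ℝ) (hlam : 0 < lam)
    (G : X → X) (hG : IsResolvent f lam G)
    (alam : ℝ)
    (halam : alam = max (a / (1 + lam * a)) ((-2 - lam * K) / (lam * (1 - lam * K)))) :
    f (G 0) = 0 ∧
    ∀ x ∈ ball (0 : X) 1, ∀ φ ∈ suppFun x, alam * ‖x‖ ^ 2 ≤ (φ (f (G x))).re :=
  stmt_10_general a ha f hf K hKdef hK lam hlam G hG alam halam
end
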